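/- Let K ⊂ ℂ be compact, z₀ ∈ ℂ, and n ∈ ℕ with n+1 ≤ #K. Then max over probability measures ν on K of λ_n(ν,z₀) equals B_n(ν_n,z₀)^{−1} = [sup_{p ∈ 𝒫_n} |p(z₀)|²/‖p‖_K²]^{−1}; equivalently, for any optimal prediction measure ν_n of order n, B_n(ν_n,z₀) = sup_{p∈𝒫_n, p≠0} |p(z₀)|²/‖p‖_K². -/

import Mathlib

/-!
Let `p` minimise `‖p‖_K` among the polynomials of degree `≤ n` with `p(z₀) = 1`; it exists because
`‖·‖_K` is a norm on `𝒫_n` once `K` has `n + 1` points. Put `m = ‖p‖_K`. Every probability measure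
`ν` on `K` has `λ_n(ν, z₀) ≤ ∫ |p|² dν ≤ m²`, and `m |q(z₀)| ≤ ‖q‖_K` for every `q ∈ 𝒫_n`.

The bound `m²` is attained. By the Kolmogorov criterion no `g ∈ 𝒫_n` with `g(z₀) = 0` has
`Re (conj p · g) > 0` on the peak set `{w ∈ K | |p(w)| = m}`, since `p - t g` would then beat `p`.
Hahn–Banach in `ℂ^{n+1}` turns this into: `m² (z₀^j)_j` is a convex combination of the vectors
`conj p(w) (w^j)_j` over peak points `w`. The resulting discrete measure `ν` satisfies
`∫ conj p · q dν = m² q(z₀)` for all `q ∈ 𝒫_n`, and integrating `|q - p|² ≥ 0` gives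
`∫ |q|² dν ≥ m²` whenever `q(z₀) = 1`.
-/

open MeasureTheory Filter Real

/-- The Christoffel function. -/
noncomputable def christoffel (μ : Measure ℂ) (n : ℕ) (z : ℂ) : ℝ :=
  sInf {r : ℝ | ∃ p : Polynomial ℂ, p.natDegree ≤ n ∧ p.eval z = 1 ∧
    r = ∫ w, (‖p.eval w‖) ^ 2 ∂μ}

/-- Sup norm of a polynomial on a set `K`. -/
noncomputable def supNorm (K : Set ℂ) (p : Polynomial ℂ) : ℝ :=
  sSup ((fun w => ‖p.eval w‖) '' K)

open scoped Polynomial ComplexConjugate Pointwise RealInnerProductSpace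
open Polynomial (C ofFn toFn)

section Coercive

variable {V : Type*} [NormedAddCommGroup V] {N : V → ℝ}

lemma exists_pos_mul_norm_le [NormedSpace ℝ V] [FiniteDimensional ℝ V] (hN : Continuous N)
    (hsmul : ∀ (t : ℝ) (c : V), N (t • c) = |t| * N c) (hpos : ∀ c ≠ 0, 0 < N c) :
    ∃ κ > 0, ∀ c, κ * ‖c‖ ≤ N c := by
  obtain ⟨κ, hκ, hsphere⟩ : ∃ κ > 0, ∀ u ∈ Metric.sphere (0 : V) 1, κ ≤ N u := by
    rcases (Metric.sphere (0 : V) 1).eq_empty_or_nonempty with h | h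
    · exact ⟨1, one_pos, by simp [h]⟩
    · obtain ⟨u, hu, hmin⟩ := (isCompact_sphere 0 1).exists_isMinOn h hN.continuousOn
      exact ⟨N u, hpos u (ne_zero_of_mem_unit_sphere ⟨u, hu⟩), hmin⟩
  refine ⟨κ, hκ, fun c => ?_⟩
  rcases eq_or_ne c 0 with rfl | hc
  · simp [show N 0 = 0 by simpa using hsmul 0 0]
  have hc' : 0 < ‖c‖ := norm_pos_iff.mpr hc
  have h := hsphere (‖c‖⁻¹ • c) (by simp [norm_smul, hc'.ne'])
  rw [hsmul, abs_of_pos (inv_pos.mpr hc')] at h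
  calc κ * ‖c‖ ≤ ‖c‖⁻¹ * N c * ‖c‖ := by gcongr
    _ = N c := by field_simp

lemma exists_mem_isMinOn_of_mul_norm_le [ProperSpace V] (hN : Continuous N) {κ : ℝ}
    (hκ : 0 < κ) (hle : ∀ c, κ * ‖c‖ ≤ N c) {A : Set V} (hA : IsClosed A) {a₀ : V}
    (ha₀ : a₀ ∈ A) : ∃ a ∈ A, IsMinOn N A a := by
  refine hN.continuousOn.exists_isMinOn' hA ha₀ (Filter.mem_inf_of_left ?_)
  refine Filter.mem_of_superset (isCompact_closedBall (0 : V) (N a₀ / κ)).compl_mem_cocompact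
    fun c hc => ?_
  simp only [Set.mem_compl_iff, Metric.mem_closedBall, dist_zero_right, not_le,
    div_lt_iff₀ hκ] at hc
  exact (hc.trans_le ((mul_comm _ _).trans_le (hle c))).le

end Coercive

lemma norm_sub_smul_lt {E : Type*} [NormedAddCommGroup E] [InnerProductSpace ℝ E] {a b : E}
    {m δ B t : ℝ} (ha : ‖a‖ ≤ m) (hδ : δ ≤ max (m ^ 2 - ‖a‖ ^ 2) ⟪a, b⟫)
    (hB : 2 * |⟪a, b⟫| + ‖b‖ ^ 2 ≤ B) (ht : 0 < t) (ht1 : t ≤ 1) (htB : t * B < δ) :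
    ‖a - t • b‖ < m := by
  have hexp : ‖a - t • b‖ ^ 2 = ‖a‖ ^ 2 - 2 * t * ⟪a, b⟫ + t ^ 2 * ‖b‖ ^ 2 := by
    rw [norm_sub_sq_real, real_inner_smul_right, norm_smul, Real.norm_of_nonneg ht.le]
    ring
  have hcross : -(t * ⟪a, b⟫) ≤ t * |⟪a, b⟫| := by
    rw [← mul_neg]; exact mul_le_mul_of_nonneg_left (neg_le_abs _) ht.le
  have hquad : t ^ 2 * ‖b‖ ^ 2 ≤ t * (t * B) := by
    rw [sq, mul_assoc]
    gcongr
    linarith [abs_nonneg ⟪a, b⟫]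
  have hsq : ‖a - t • b‖ ^ 2 < m ^ 2 := by
    rcases le_max_iff.mp hδ with h | h
    · have : t * (t * ‖b‖ ^ 2) ≤ t * ‖b‖ ^ 2 := by
        gcongr; exact mul_le_of_le_one_left (by positivity) ht1
      nlinarith
    · nlinarith [sq_nonneg ‖a‖, pow_le_pow_left₀ (norm_nonneg a) ha 2]
  exact lt_of_pow_lt_pow_left₀ 2 ((norm_nonneg a).trans ha) hsq

theorem isCompact_convexHull {E : Type*} [NormedAddCommGroup E] [NormedSpace ℝ E]
    [FiniteDimensional ℝ E] {s : Set E} (hs : IsCompact s) : IsCompact (convexHull ℝ s) := by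
  let combos (k : ℕ) : Set E := (fun x : (Fin k → ℝ) × (Fin k → E) => ∑ i, x.1 i • x.2 i) ''
    (stdSimplex ℝ (Fin k) ×ˢ Set.univ.pi fun _ => s)
  have hcombos : ∀ k, combos k ⊆ convexHull ℝ s := by
    rintro k _ ⟨⟨w, z⟩, ⟨⟨hw0, hw1⟩, hz⟩, rfl⟩
    exact (convex_convexHull ℝ s).sum_mem (fun i _ => hw0 i) hw1
      fun i _ => subset_convexHull ℝ s (hz i trivial)
  -- Carathéodory: at most `finrank + 1` points are needed.
  have hcara : convexHull ℝ s ⊆ ⋃ k ∈ Finset.range (Module.finrank ℝ E + 2), combos k := by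
    intro x hx
    obtain ⟨ι, _, z, w, hz, hai, hw0, hw1, rfl⟩ := eq_pos_convex_span_of_mem_convexHull hx
    let e := Fintype.equivFin ι
    refine Set.mem_biUnion (x := Fintype.card ι) (Finset.mem_range.mpr (Nat.lt_succ_of_le ?_))
      ⟨(w ∘ e.symm, z ∘ e.symm), ⟨⟨fun i => (hw0 _).le, ?_⟩, fun i _ => hz ⟨_, rfl⟩⟩, ?_⟩
    · exact hai.card_le_finrank_succ.trans (Nat.add_le_add_right (Submodule.finrank_le _) 1)
    · simpa [e.symm.sum_comp] using hw1
    · exact e.symm.sum_comp fun i => w i • z i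
  rw [hcara.antisymm (Set.iUnion₂_subset fun k _ => hcombos k)]
  exact Finset.isCompact_biUnion _ fun k _ =>
    ((isCompact_stdSimplex ℝ _).prod (isCompact_univ_pi fun _ => hs)).image (by fun_prop)

theorem exists_isProbabilityMeasure_integral_eq_of_mem_convexHull {α V : Type*}
    [MeasurableSpace α] [MeasurableSingletonClass α] [AddCommGroup V] [Module ℝ V]
    {ψ : α → V} {E : Set α} {v : V} (hv : v ∈ convexHull ℝ (ψ '' E)) :
    ∃ ν : Measure α, IsProbabilityMeasure ν ∧ ν Eᶜ = 0 ∧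
      ∀ L : V →ₗ[ℝ] ℝ, ∫ w, L (ψ w) ∂ν = L v := by
  obtain ⟨ι, _, a, y, ha0, ha1, hy, rfl⟩ := mem_convexHull_iff_exists_fintype.mp hv
  choose x hxE hxy using hy
  refine ⟨∑ i, ENNReal.ofReal (a i) • Measure.dirac (x i), ⟨?_⟩, ?_, fun L => ?_⟩
  · simp [← ENNReal.ofReal_sum_of_nonneg fun i _ => ha0 i, ha1]
  · simp [Measure.dirac_apply, hxE]
  · rw [integral_finsetSum_measure fun i _ =>
      (integrable_dirac ENNReal.coe_lt_top).smul_measure ENNReal.ofReal_ne_top]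
    simp [integral_smul_measure, ENNReal.toReal_ofReal (ha0 _), hxy]

lemma integrable_of_measure_compl_eq_zero {α E : Type*} [TopologicalSpace α] [T2Space α]
    [MeasurableSpace α] [OpensMeasurableSpace α] [NormedAddCommGroup E] {μ : Measure α}
    [IsFiniteMeasure μ] {K : Set α} (hK : IsCompact K) (hμK : μ Kᶜ = 0) {f : α → E}
    (hf : Continuous f) : Integrable f μ := by
  have h := hf.continuousOn.integrableOn_compact (μ := μ) hK
  rwa [IntegrableOn, Measure.restrict_eq_self_of_ae_mem (ae_iff.mpr hμK)] at h

section SupNorm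

variable {K : Set ℂ}

lemma supNorm_nonneg (p : ℂ[X]) : 0 ≤ supNorm K p :=
  Real.sSup_nonneg (by rintro _ ⟨w, -, rfl⟩; exact norm_nonneg _)

lemma norm_eval_le_supNorm (hK : IsCompact K) (p : ℂ[X]) {w : ℂ} (hw : w ∈ K) :
    ‖p.eval w‖ ≤ supNorm K p :=
  le_csSup (hK.image (continuous_norm.comp p.continuous)).bddAbove ⟨w, hw, rfl⟩

lemma exists_norm_eval_eq_supNorm (hK : IsCompact K) (hne : K.Nonempty) (p : ℂ[X]) :
    ∃ w ∈ K, ‖p.eval w‖ = supNorm K p := by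
  obtain ⟨w, hw, h⟩ :=
    hK.exists_sSup_image_eq hne (continuous_norm.comp p.continuous).continuousOn
  exact ⟨w, hw, h.symm⟩

lemma supNorm_C_mul (a : ℂ) (p : ℂ[X]) : supNorm K (C a * p) = ‖a‖ * supNorm K p := by
  have : (fun w => ‖(C a * p).eval w‖) '' K = ‖a‖ • (fun w => ‖p.eval w‖) '' K := by
    rw [← Set.image_smul, Set.image_image]
    simp
  rw [supNorm, this, Real.sSup_smul_of_nonneg (norm_nonneg a), smul_eq_mul, supNorm]

lemma supNorm_pos_of_natDegree_lt_card (hK : IsCompact K) {S : Finset ℂ} (hS : ↑S ⊆ K)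
    {p : ℂ[X]} (hp : p ≠ 0) (hdeg : p.natDegree < S.card) : 0 < supNorm K p := by
  refine (supNorm_nonneg p).lt_of_ne fun h => hp ?_
  refine Polynomial.eq_zero_of_natDegree_lt_card_of_eval_eq_zero' p S (fun w hw => ?_) hdeg
  exact norm_le_zero_iff.mp (h ▸ norm_eval_le_supNorm hK p (hS hw))

end SupNorm

def normalizedPolys (n : ℕ) (z₀ : ℂ) : Set ℂ[X] := {p | p.natDegree ≤ n ∧ p.eval z₀ = 1}

section Minimizer

variable {K : Set ℂ} {n : ℕ}

lemma eval_ofFn {k : ℕ} (c : Fin k → ℂ) (w : ℂ) :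
    (ofFn k c).eval w = ∑ i, c i * w ^ (i : ℕ) := by
  simp [Polynomial.ofFn_eq_sum_monomial, Polynomial.eval_finsetSum]

lemma natDegree_ofFn_le (c : Fin (n + 1) → ℂ) : (ofFn (n + 1) c).natDegree ≤ n :=
  Nat.lt_succ_iff.mp (Polynomial.ofFn_natDegree_lt (Nat.succ_pos n) c)

lemma natDegree_sub_C_mul_le {p q : ℂ[X]} (hp : p.natDegree ≤ n) (hq : q.natDegree ≤ n)
    (a : ℂ) : (p - C a * q).natDegree ≤ n :=
  (Polynomial.natDegree_sub_le_of_le hp ((Polynomial.natDegree_C_mul_le _ _).trans hq)).trans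
    (max_self n).le

lemma continuous_supNorm_ofFn (hK : IsCompact K) (k : ℕ) :
    Continuous fun c : Fin k → ℂ => supNorm K (ofFn k c) := by
  refine hK.continuous_sSup ?_
  simp only [Function.HasUncurry.uncurry, eval_ofFn]
  fun_prop

theorem exists_mem_isMinOn_supNorm (hK : IsCompact K) {S : Finset ℂ} (hS : ↑S ⊆ K)
    (hcard : S.card = n + 1) (z₀ : ℂ) :
    ∃ p ∈ normalizedPolys n z₀, IsMinOn (supNorm K) (normalizedPolys n z₀) p := by
  set N : (Fin (n + 1) → ℂ) → ℝ := fun c => supNorm K (ofFn (n + 1) c)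
  have hN := continuous_supNorm_ofFn hK (n + 1)
  have hsmul (t : ℝ) (c : Fin (n + 1) → ℂ) : N (t • c) = |t| * N c := by
    have : ofFn (n + 1) (t • c) = C (t : ℂ) * ofFn (n + 1) c := by
      rw [← Polynomial.smul_eq_C_mul, ← map_smul]; rfl
    simp only [N, this, supNorm_C_mul, Complex.norm_real, Real.norm_eq_abs]
  have hpos (c : Fin (n + 1) → ℂ) (hc : c ≠ 0) : 0 < N c :=
    supNorm_pos_of_natDegree_lt_card hK hS
      (fun h => hc (Polynomial.injective_ofFn _ (h.trans (map_zero _).symm)))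
      (by rw [hcard]; exact Polynomial.ofFn_natDegree_lt (Nat.succ_pos n) c)
  have hofFn {q : ℂ[X]} (hq : q.natDegree ≤ n) : ofFn (n + 1) (toFn (n + 1) q) = q :=
    Polynomial.ofFn_comp_toFn_eq_id_of_natDegree_lt (Nat.lt_succ_of_le hq)
  obtain ⟨κ, hκ, hle⟩ := exists_pos_mul_norm_le hN hsmul hpos
  have hA : IsClosed {c : Fin (n + 1) → ℂ | (ofFn (n + 1) c).eval z₀ = 1} := by
    simp only [eval_ofFn]
    exact isClosed_eq (by fun_prop) continuous_const
  obtain ⟨c, hc, hmin⟩ := exists_mem_isMinOn_of_mul_norm_le hN hκ hle hA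
    (a₀ := toFn (n + 1) 1) (by simp [hofFn])
  refine ⟨ofFn (n + 1) c, ⟨natDegree_ofFn_le c, hc⟩, fun q hq => ?_⟩
  have := hmin (a := toFn (n + 1) q) (by simpa [hofFn hq.1] using hq.2)
  simpa [N, hofFn hq.1] using this

end Minimizer

section Kolmogorov

variable {K : Set ℂ} {n : ℕ} {z₀ : ℂ} {p : ℂ[X]}

theorem exists_peak_inner_nonpos (hK : IsCompact K) (hne : K.Nonempty)
    (hp : p ∈ normalizedPolys n z₀) (hmin : IsMinOn (supNorm K) (normalizedPolys n z₀) p)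
    {g : ℂ[X]} (hg : g.natDegree ≤ n) (hg0 : g.eval z₀ = 0) :
    ∃ w ∈ K, ‖p.eval w‖ = supNorm K p ∧ ⟪p.eval w, g.eval w⟫ ≤ 0 := by
  by_contra! hpeak
  set m := supNorm K p
  set F : ℂ → ℝ := fun w => max (m ^ 2 - ‖p.eval w‖ ^ 2) ⟪p.eval w, g.eval w⟫
  have hF : ∀ w ∈ K, 0 < F w := by
    intro w hw
    rcases (norm_eval_le_supNorm hK p hw).lt_or_eq with h | h
    · exact lt_max_of_lt_left (sub_pos.mpr (pow_lt_pow_left₀ h (norm_nonneg _) two_ne_zero))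
    · exact lt_max_of_lt_right (hpeak w hw h)
  obtain ⟨w₀, hw₀, hFmin⟩ := hK.exists_isMinOn hne (by fun_prop : Continuous F).continuousOn
  obtain ⟨B, hB⟩ := hK.exists_bound_of_continuousOn
    (by fun_prop : Continuous fun w => 2 * |⟪p.eval w, g.eval w⟫| + ‖g.eval w‖ ^ 2).continuousOn
  have hδ : 0 < F w₀ := hF w₀ hw₀
  have hB0 : 0 ≤ B := (norm_nonneg _).trans (hB w₀ hw₀)
  set t := F w₀ / (F w₀ + B)
  have ht : 0 < t := by positivity
  have ht1 : t ≤ 1 := div_le_one_of_le₀ (by linarith) (by positivity)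
  have htB : t * B < F w₀ := by
    rw [div_mul_eq_mul_div, div_lt_iff₀ (by positivity)]
    nlinarith
  set q := p - C (t : ℂ) * g
  have hq : q ∈ normalizedPolys n z₀ := ⟨natDegree_sub_C_mul_le hp.1 hg _, by simp [q, hp.2, hg0]⟩
  obtain ⟨w, hw, hwq⟩ := exists_norm_eval_eq_supNorm hK hne q
  have hlt : ‖q.eval w‖ < m := by
    have := norm_sub_smul_lt (norm_eval_le_supNorm hK p hw) (hFmin hw)
      ((le_abs_self _).trans (hB w hw)) ht ht1 htB
    simpa [q, Complex.real_smul] using this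
  exact (hmin hq).not_gt (hwq ▸ hlt)

end Kolmogorov

section Reproducing

variable {K : Set ℂ} {n : ℕ} {z₀ : ℂ} {p : ℂ[X]}

def powerVec (k : ℕ) (w : ℂ) : Fin k → ℂ := fun j => w ^ (j : ℕ)

lemma continuous_powerVec (k : ℕ) : Continuous (powerVec k) :=
  continuous_pi fun j => continuous_pow (j : ℕ)

lemma apply_powerVec {k : ℕ} (f : (Fin k → ℂ) →ₗ[ℂ] ℂ) (w : ℂ) :
    f (powerVec k w) = (ofFn k fun i => f (Pi.single i 1)).eval w := by
  rw [LinearMap.pi_apply_eq_sum_univ f, eval_ofFn]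
  refine Finset.sum_congr rfl fun i _ => ?_
  rw [smul_eq_mul, mul_comm]
  congr
  ext j
  simp [Pi.single_apply, eq_comm]

theorem mem_convexHull_peak (hK : IsCompact K) (hne : K.Nonempty)
    (hp : p ∈ normalizedPolys n z₀) (hmin : IsMinOn (supNorm K) (normalizedPolys n z₀) p) :
    ((supNorm K p ^ 2 : ℝ) : ℂ) • powerVec (n + 1) z₀ ∈ convexHull ℝ
      ((fun w => conj (p.eval w) • powerVec (n + 1) w) '' {w ∈ K | ‖p.eval w‖ = supNorm K p}) := by
  set m := supNorm K p
  have hψ : Continuous fun w => conj (p.eval w) • powerVec (n + 1) w :=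
    (Complex.continuous_conj.comp p.continuous).smul (continuous_powerVec _)
  have hE : IsCompact {w ∈ K | ‖p.eval w‖ = m} :=
    hK.inter_right (isClosed_eq (by fun_prop) continuous_const)
  by_contra hv
  obtain ⟨f, u, hfv, hfψ⟩ := RCLike.geometric_hahn_banach_point_closed (𝕜 := ℂ)
    (convex_convexHull ℝ _) (isCompact_convexHull (hE.image hψ)).isClosed hv
  set q := ofFn (n + 1) fun i => f (Pi.single i 1)
  have hf (w : ℂ) : f (powerVec (n + 1) w) = q.eval w := apply_powerVec f.toLinearMap w
  -- `g = q - q(z₀) p` vanishes at `z₀`, and at a peak point `⟪p, g⟫` is the separation gap of `f`.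
  obtain ⟨w, hw, hwm, hinner⟩ := exists_peak_inner_nonpos hK hne hp hmin
    (g := q - C (q.eval z₀) * p) (natDegree_sub_C_mul_le (natDegree_ofFn_le _) hp.1 _)
    (by simp [hp.2])
  have hsep := hfψ _ (subset_convexHull ℝ _ ⟨w, ⟨hw, hwm⟩, rfl⟩)
  have hpp : conj (p.eval w) * p.eval w = (m : ℂ) ^ 2 := by rw [Complex.conj_mul', hwm]
  have key : (q - C (q.eval z₀) * p).eval w * conj (p.eval w)
      = conj (p.eval w) * q.eval w - ((m ^ 2 : ℝ) : ℂ) * q.eval z₀ := by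
    simp only [Polynomial.eval_sub, Polynomial.eval_mul, Polynomial.eval_C, Complex.ofReal_pow]
    linear_combination (-q.eval z₀) * hpp
  rw [Complex.inner, key, Complex.sub_re] at hinner
  simp only [map_smul, smul_eq_mul, hf, RCLike.re_to_complex] at hfv hsep
  linarith

theorem exists_reproducing_measure (hK : IsCompact K) (hne : K.Nonempty)
    (hp : p ∈ normalizedPolys n z₀) (hmin : IsMinOn (supNorm K) (normalizedPolys n z₀) p) :
    ∃ ν : Measure ℂ, IsProbabilityMeasure ν ∧ ν Kᶜ = 0 ∧ ∀ q : ℂ[X], q.natDegree ≤ n →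
      ∫ w, ⟪p.eval w, q.eval w⟫ ∂ν = supNorm K p ^ 2 * (q.eval z₀).re := by
  obtain ⟨ν, hν, hνE, hL⟩ :=
    exists_isProbabilityMeasure_integral_eq_of_mem_convexHull (mem_convexHull_peak hK hne hp hmin)
  refine ⟨ν, hν, measure_mono_null (Set.compl_subset_compl.mpr (Set.sep_subset K _)) hνE,
    fun q hq => ?_⟩
  set f := Fintype.linearCombination ℂ (toFn (n + 1) q)
  have hf (w : ℂ) : f (powerVec (n + 1) w) = q.eval w := by
    rw [apply_powerVec]
    simp [f, Polynomial.ofFn_comp_toFn_eq_id_of_natDegree_lt (Nat.lt_succ_of_le hq)]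
  have := hL (Complex.reLm.comp (f.restrictScalars ℝ))
  simp only [LinearMap.comp_apply, LinearMap.restrictScalars_apply, map_smul, smul_eq_mul, hf,
    Complex.reLm_coe, Complex.re_ofReal_mul] at this
  simpa only [Complex.inner, mul_comm] using this

end Reproducing

section Christoffel

variable {K : Set ℂ} {n : ℕ} {z₀ : ℂ} {p : ℂ[X]}

lemma christoffel_le_integral (ν : Measure ℂ) (hp : p ∈ normalizedPolys n z₀) :
    christoffel ν n z₀ ≤ ∫ w, ‖p.eval w‖ ^ 2 ∂ν :=
  csInf_le ⟨0, by rintro _ ⟨q, -, -, rfl⟩; positivity⟩ ⟨p, hp.1, hp.2, rfl⟩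

lemma christoffel_le_sq_supNorm (hK : IsCompact K) {ν : Measure ℂ} [IsProbabilityMeasure ν]
    (hνK : ν Kᶜ = 0) (hp : p ∈ normalizedPolys n z₀) : christoffel ν n z₀ ≤ supNorm K p ^ 2 := by
  refine (christoffel_le_integral ν hp).trans ?_
  calc ∫ w, ‖p.eval w‖ ^ 2 ∂ν ≤ ∫ _, supNorm K p ^ 2 ∂ν := by
        refine integral_mono_of_nonneg (.of_forall fun w => by positivity) (integrable_const _) ?_
        filter_upwards [ae_iff.mpr hνK] with w hw
        exact pow_le_pow_left₀ (norm_nonneg _) (norm_eval_le_supNorm hK p hw) 2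
    _ = supNorm K p ^ 2 := by simp

theorem christoffel_eq_of_integral_inner_eq (hK : IsCompact K) {ν : Measure ℂ}
    [IsFiniteMeasure ν] (hνK : ν Kᶜ = 0) (hp : p ∈ normalizedPolys n z₀) {s : ℝ}
    (hrep : ∀ q : ℂ[X], q.natDegree ≤ n → ∫ w, ⟪p.eval w, q.eval w⟫ ∂ν = s * (q.eval z₀).re) :
    christoffel ν n z₀ = s := by
  have hint {f : ℂ → ℝ} (hf : Continuous f) : Integrable f ν :=
    integrable_of_measure_compl_eq_zero hK hνK hf
  have hps : ∫ w, ‖p.eval w‖ ^ 2 ∂ν = s := by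
    simpa [real_inner_self_eq_norm_sq, hp.2] using hrep p hp.1
  refine le_antisymm (hps ▸ christoffel_le_integral ν hp) (le_csInf ⟨_, p, hp.1, hp.2, rfl⟩ ?_)
  rintro _ ⟨q, hq, hq1, rfl⟩
  calc s = ∫ w, (2 * ⟪p.eval w, q.eval w⟫ - ‖p.eval w‖ ^ 2) ∂ν := by
        rw [integral_sub ((hint (by fun_prop)).const_mul 2) (hint (by fun_prop)),
          integral_const_mul, hrep q hq, hq1, hps]
        simp only [Complex.one_re]
        ring
    _ ≤ ∫ w, ‖q.eval w‖ ^ 2 ∂ν := by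
        refine integral_mono (hint (by fun_prop)) (hint (by fun_prop)) fun w => ?_
        nlinarith [norm_sub_sq_real (p.eval w) (q.eval w), sq_nonneg ‖p.eval w - q.eval w‖]

lemma supNorm_mul_norm_eval_le (hmin : IsMinOn (supNorm K) (normalizedPolys n z₀) p)
    {q : ℂ[X]} (hq : q.natDegree ≤ n) : supNorm K p * ‖q.eval z₀‖ ≤ supNorm K q := by
  rcases eq_or_ne (q.eval z₀) 0 with hz | hz
  · simp [hz, supNorm_nonneg]
  have h : supNorm K p ≤ supNorm K (C (q.eval z₀)⁻¹ * q) := hmin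
    ⟨(Polynomial.natDegree_C_mul_le _ _).trans hq, by simp [hz]⟩
  rw [supNorm_C_mul, norm_inv, le_inv_mul_iff₀ (norm_pos_iff.mpr hz)] at h
  linarith

theorem isGreatest_norm_eval_sq_div_supNorm_sq (hK : IsCompact K) {S : Finset ℂ} (hS : ↑S ⊆ K)
    (hcard : S.card = n + 1) (hp : p ∈ normalizedPolys n z₀)
    (hmin : IsMinOn (supNorm K) (normalizedPolys n z₀) p) :
    IsGreatest {r : ℝ | ∃ q : ℂ[X], q ≠ 0 ∧ q.natDegree ≤ n ∧
      r = ‖q.eval z₀‖ ^ 2 / supNorm K q ^ 2} (supNorm K p ^ 2)⁻¹ := by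
  have hpos {q : ℂ[X]} (hq0 : q ≠ 0) (hq : q.natDegree ≤ n) : 0 < supNorm K q :=
    supNorm_pos_of_natDegree_lt_card hK hS hq0 (hcard ▸ Nat.lt_succ_of_le hq)
  have hp0 : p ≠ 0 := fun h => by simpa [h] using hp.2
  refine ⟨⟨p, hp0, hp.1, by rw [hp.2, norm_one, one_pow, one_div]⟩, ?_⟩
  rintro _ ⟨q, hq0, hq, rfl⟩
  have hpq := pow_le_pow_left₀ (mul_nonneg (supNorm_nonneg p) (norm_nonneg _))
    (supNorm_mul_norm_eval_le hmin hq) 2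
  rw [div_le_iff₀ (pow_pos (hpos hq0 hq) 2), le_inv_mul_iff₀ (pow_pos (hpos hp0 hp.1) 2)]
  linarith [mul_pow (supNorm K p) ‖q.eval z₀‖ 2]

end Christoffel

/-- Minimax identity: the maximum of the Christoffel function over probability measures
on `K` equals the reciprocal of the maximal squared growth at `z₀`; equivalently, for
any optimal prediction measure `ν`, `B_n(ν,z₀) = sup_p |p(z₀)|²/‖p‖_K²`. -/
theorem stmt8 (K : Set ℂ) (hK : IsCompact K) (z₀ : ℂ) (n : ℕ)
    (hcard : ∃ S : Finset ℂ, ↑S ⊆ K ∧ S.card = n + 1) :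
    sSup {r : ℝ | ∃ ν : Measure ℂ, IsProbabilityMeasure ν ∧ ν Kᶜ = 0 ∧
        r = christoffel ν n z₀}
      = (sSup {r : ℝ | ∃ p : Polynomial ℂ, p ≠ 0 ∧ p.natDegree ≤ n ∧
          r = (‖p.eval z₀‖) ^ 2 / (supNorm K p) ^ 2})⁻¹ ∧
    ∀ ν : Measure ℂ, IsProbabilityMeasure ν → ν Kᶜ = 0 →
      (∀ μ : Measure ℂ, IsProbabilityMeasure μ → μ Kᶜ = 0 →
        christoffel μ n z₀ ≤ christoffel ν n z₀) →
      (christoffel ν n z₀)⁻¹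
        = sSup {r : ℝ | ∃ p : Polynomial ℂ, p ≠ 0 ∧ p.natDegree ≤ n ∧
            r = (‖p.eval z₀‖) ^ 2 / (supNorm K p) ^ 2} := by
  obtain ⟨S, hSK, hS⟩ := hcard
  have hne : K.Nonempty :=
    (Finset.card_pos.mp (hS ▸ Nat.succ_pos n)).to_set.mono hSK
  obtain ⟨p, hp, hmin⟩ := exists_mem_isMinOn_supNorm hK hSK hS z₀
  obtain ⟨ν₀, hν₀, hν₀K, hrep⟩ := exists_reproducing_measure hK hne hp hmin
  have hν₀opt : christoffel ν₀ n z₀ = supNorm K p ^ 2 :=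
    christoffel_eq_of_integral_inner_eq hK hν₀K hp hrep
  have hmax : IsGreatest {r : ℝ | ∃ ν : Measure ℂ, IsProbabilityMeasure ν ∧ ν Kᶜ = 0 ∧
      r = christoffel ν n z₀} (supNorm K p ^ 2) :=
    ⟨⟨ν₀, hν₀, hν₀K, hν₀opt.symm⟩, by
      rintro _ ⟨ν, hν, hνK, rfl⟩
      exact christoffel_le_sq_supNorm hK hνK hp⟩
  rw [hmax.csSup_eq, (isGreatest_norm_eval_sq_div_supNorm_sq hK hSK hS hp hmin).csSup_eq, inv_inv]
  refine ⟨rfl, fun ν hν hνK hopt => ?_⟩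
  rw [le_antisymm (hmax.2 ⟨ν, hν, hνK, rfl⟩) (hν₀opt ▸ hopt ν₀ hν₀ hν₀K)]
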